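/- arXiv:2512.13020 — 4 statements merged into one kernel-verified Lean document; each statement's English description precedes it below -/
import Mathlib

section
/- Fix m, n ≥ 1. A signed partial matching σ ∈ SPM(m,n) satisfies (a) σ†(i) ≤_SPM σ†(i+1) for all 1 ≤ i ≤ m−1, (b) σ_†(j) ≤_SPM σ_†(j+1) for all 1 ≤ j ≤ n−1, and (c) σ_†(n) ≤_SPM ∞, if and only if σ = σ_k for some 0 ≤ k ≤ min(m,n). -/
/-- A finset `s ⊆ ℤ × ℤ` is (the graph of) a signed partial matching `(I, J, μ)` between
`{±1,…,±m}` and `{±1,…,±n}`. -/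
def IsSignedPM (m n : ℕ) (s : Finset (ℤ × ℤ)) : Prop :=
  (∀ p ∈ s, (1 ≤ |p.1| ∧ |p.1| ≤ (m : ℤ)) ∧ (1 ≤ |p.2| ∧ |p.2| ≤ (n : ℤ))) ∧
  (∀ p ∈ s, ∀ q ∈ s, p.1 = q.1 ↔ p.2 = q.2) ∧
  (∀ p ∈ s, (-p.1, -p.2) ∈ s)

/-- The order-preserving enumeration of the totally ordered set
`{0 < 1 < ⋯ < n < -n < -(n-1) < ⋯ < -1}`: `0 ↦ 0`, `j ↦ j` for `1 ≤ j ≤ n`,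
`-i ↦ 2n+1-i` for `1 ≤ i ≤ n`. -/
def ordN (n : ℕ) (j : ℤ) : ℕ :=
  if 0 ≤ j then j.toNat else 2 * n + 1 - (-j).toNat

/-- The order-preserving enumeration of the totally ordered set
`{1 < ⋯ < m < ∞ < -m < ⋯ < -1}` (with `∞ ↦ m+1`): `i ↦ i` for `1 ≤ i ≤ m`,
`-i ↦ 2m+2-i` for `1 ≤ i ≤ m`. -/
def ordM (m : ℕ) (i : ℤ) : ℕ :=
  if 0 < i then i.toNat else 2 * m + 2 - (-i).toNat

/-- `σ†(i) ∈ {0, ±1,…,±n}` for `1 ≤ i ≤ m`, encoded via `ordN`: `σ†(i) = μ(i)` if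
`i ∈ I` and `σ†(i) = 0` otherwise. -/
def spmSharp (n : ℕ) (s : Finset (ℤ × ℤ)) (i : ℕ) : ℕ :=
  ∑ p ∈ s.filter (fun p => p.1 = (i : ℤ)), ordN n p.2

/-- `σ_†(j) ∈ {±1,…,±m, ∞}` for `1 ≤ j ≤ n`, encoded via `ordM` (so `∞` is encoded as
`m+1`): `σ_†(j) = μ⁻¹(j)` if `j ∈ J` and `σ_†(j) = ∞` otherwise. -/
def spmDag (m : ℕ) (s : Finset (ℤ × ℤ)) (j : ℕ) : ℕ :=
  if (s.filter fun p => p.2 = (j : ℤ)).Nonempty then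
    ∑ p ∈ s.filter (fun p => p.2 = (j : ℤ)), ordM m p.1
  else m + 1

/-- The signed partial matching `σ_k` with `I = {±(m-k+1),…,±m}`, `J = {±1,…,±k}`,
`μ(m-k+t) = t` for `1 ≤ t ≤ k` and `μ(-a) = -μ(a)`. -/
def sigmaK (m n k : ℕ) : Finset (ℤ × ℤ) :=
  ((Finset.Icc 1 k).image fun t : ℕ => (((m : ℤ) - (k : ℤ) + (t : ℤ)), (t : ℤ))) ∪
  ((Finset.Icc 1 k).image fun t : ℕ => (-((m : ℤ) - (k : ℤ) + (t : ℤ)), -(t : ℤ)))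

section aux
variable {m n : ℕ} {s : Finset (ℤ × ℤ)}

lemma filter_fst_singleton (hfun : ∀ p ∈ s, ∀ q ∈ s, p.1 = q.1 ↔ p.2 = q.2)
    {a b : ℤ} (hab : (a, b) ∈ s) :
    s.filter (fun p => p.1 = a) = {(a, b)} := by
  ext p
  simp only [Finset.mem_filter, Finset.mem_singleton]
  constructor
  · rintro ⟨hp, h1⟩
    exact Prod.ext h1 ((hfun p hp (a, b) hab).mp h1)
  · rintro rfl; exact ⟨hab, rfl⟩

lemma filter_snd_singleton (hfun : ∀ p ∈ s, ∀ q ∈ s, p.1 = q.1 ↔ p.2 = q.2)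
    {a b : ℤ} (hab : (a, b) ∈ s) :
    s.filter (fun p => p.2 = b) = {(a, b)} := by
  ext p
  simp only [Finset.mem_filter, Finset.mem_singleton]
  constructor
  · rintro ⟨hp, h2⟩
    exact Prod.ext ((hfun p hp (a, b) hab).mpr h2) h2
  · rintro rfl; exact ⟨hab, rfl⟩

lemma spmSharp_eq (hfun : ∀ p ∈ s, ∀ q ∈ s, p.1 = q.1 ↔ p.2 = q.2)
    {i : ℕ} {b : ℤ} (hab : ((i : ℤ), b) ∈ s) :
    spmSharp n s i = ordN n b := by
  unfold spmSharp
  rw [filter_fst_singleton hfun hab, Finset.sum_singleton]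

lemma spmSharp_eq_zero {i : ℕ} (h : ∀ b, ((i : ℤ), b) ∉ s) :
    spmSharp n s i = 0 := by
  unfold spmSharp
  rw [Finset.filter_false_of_mem, Finset.sum_empty]
  intro p hp hpi
  exact h p.2 (by rw [← hpi]; simpa using hp)

lemma spmDag_eq (hfun : ∀ p ∈ s, ∀ q ∈ s, p.1 = q.1 ↔ p.2 = q.2)
    {j : ℕ} {a : ℤ} (hab : (a, (j : ℤ)) ∈ s) :
    spmDag m s j = ordM m a := by
  unfold spmDag
  rw [filter_snd_singleton hfun hab]
  simp

lemma spmDag_eq_top {j : ℕ} (h : ∀ a, (a, (j : ℤ)) ∉ s) :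
    spmDag m s j = m + 1 := by
  unfold spmDag
  rw [if_neg]
  rw [Finset.filter_nonempty_iff]
  push_neg
  intro p hp hpj
  exact h p.1 (by rw [← hpj]; simpa using hp)

end aux

lemma mem_sigmaK {m n k : ℕ} {a b : ℤ} :
    (a, b) ∈ sigmaK m n k ↔
      (∃ t : ℕ, 1 ≤ t ∧ t ≤ k ∧ a = (m : ℤ) - (k : ℤ) + t ∧ b = t) ∨
      (∃ t : ℕ, 1 ≤ t ∧ t ≤ k ∧ a = -((m : ℤ) - (k : ℤ) + t) ∧ b = -(t : ℤ)) := by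
  simp only [sigmaK, Finset.mem_union, Finset.mem_image, Finset.mem_Icc, Prod.mk.injEq]
  constructor
  · rintro (⟨t, ⟨h1, h2⟩, h3, h4⟩ | ⟨t, ⟨h1, h2⟩, h3, h4⟩)
    · exact Or.inl ⟨t, h1, h2, h3.symm, h4.symm⟩
    · exact Or.inr ⟨t, h1, h2, h3.symm, h4.symm⟩
  · rintro (⟨t, h1, h2, h3, h4⟩ | ⟨t, h1, h2, h3, h4⟩)
    · exact Or.inl ⟨t, ⟨h1, h2⟩, h3.symm, h4.symm⟩
    · exact Or.inr ⟨t, ⟨h1, h2⟩, h3.symm, h4.symm⟩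

lemma spmSharp_sigmaK {m n k : ℕ} (hk : k ≤ m) (hkn : k ≤ n)
    (hfun : ∀ p ∈ sigmaK m n k, ∀ q ∈ sigmaK m n k, p.1 = q.1 ↔ p.2 = q.2)
    {i : ℕ} (hi1 : 1 ≤ i) (him : i ≤ m) :
    spmSharp n (sigmaK m n k) i = i - (m - k) := by
  by_cases hc : m - k < i
  · set t : ℕ := i - (m - k) with ht
    have hmem : ((i : ℤ), (t : ℤ)) ∈ sigmaK m n k := by
      rw [mem_sigmaK]
      exact Or.inl ⟨t, by omega, by omega, by push_cast; omega, rfl⟩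
    rw [spmSharp_eq hfun hmem]
    simp [ordN]
  · rw [spmSharp_eq_zero]
    · omega
    · intro b hb
      rw [mem_sigmaK] at hb
      rcases hb with ⟨t, h1, h2, h3, _⟩ | ⟨t, h1, h2, h3, _⟩ <;> omega

lemma spmDag_sigmaK_le {m n k : ℕ} (hk : k ≤ m) (hkn : k ≤ n)
    (hfun : ∀ p ∈ sigmaK m n k, ∀ q ∈ sigmaK m n k, p.1 = q.1 ↔ p.2 = q.2)
    {j : ℕ} (hj1 : 1 ≤ j) (hjn : j ≤ n) :
    spmDag m (sigmaK m n k) j = if j ≤ k then m - k + j else m + 1 := by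
  by_cases hc : j ≤ k
  · have hmem : (((m - k + j : ℕ) : ℤ), (j : ℤ)) ∈ sigmaK m n k := by
      rw [mem_sigmaK]
      exact Or.inl ⟨j, hj1, hc, by push_cast; omega, rfl⟩
    rw [spmDag_eq hfun hmem, if_pos hc]
    simp only [ordM, if_pos (by positivity : (0:ℤ) < ((m - k + j : ℕ) : ℤ))]
    · omega
  · rw [spmDag_eq_top, if_neg hc]
    intro a ha
    rw [mem_sigmaK] at ha
    rcases ha with ⟨t, h1, h2, _, h4⟩ | ⟨t, h1, h2, _, h4⟩ <;> omega

lemma spm_forward (m n : ℕ) (hm : 1 ≤ m) (hn : 1 ≤ n)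
    (s : Finset (ℤ × ℤ)) (hs : IsSignedPM m n s)
    (ha : ∀ i : ℕ, 1 ≤ i → i + 1 ≤ m → spmSharp n s i ≤ spmSharp n s (i + 1))
    (hb : ∀ j : ℕ, 1 ≤ j → j + 1 ≤ n → spmDag m s j ≤ spmDag m s (j + 1))
    (hc : spmDag m s n ≤ m + 1) :
    ∃ k, k ≤ m ∧ k ≤ n ∧ s = sigmaK m n k := by
  classical
  obtain ⟨hbd, hfun, hneg⟩ := hs
  -- spmDag is monotone up to n
  have hDagMono : ∀ j j' : ℕ, 1 ≤ j → j ≤ j' → j' ≤ n → spmDag m s j ≤ spmDag m s j' := by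
    intro j j' hj hjj'
    induction j' with
    | zero => omega
    | succ j'' ih =>
      intro hj'n
      rcases Nat.lt_or_ge j (j'' + 1) with h | h
      · have h1 : j ≤ j'' := by omega
        have h2 : 1 ≤ j'' := by omega
        exact le_trans (ih h1 (by omega)) (hb j'' h2 hj'n)
      · have : j = j'' + 1 := by omega
        subst this; rfl
  have hDagLe : ∀ j : ℕ, 1 ≤ j → j ≤ n → spmDag m s j ≤ m + 1 := by
    intro j hj hjn
    exact le_trans (hDagMono j n hj hjn le_rfl) hc
  -- positives match to positives
  have pos2 : ∀ a b : ℤ, (a, b) ∈ s → 1 ≤ b → 1 ≤ a := by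
    intro a b hab hbpos
    by_contra hneg'
    push_neg at hneg'
    obtain ⟨⟨ha1, ha2⟩, hb1, hb2⟩ := hbd _ hab
    simp only at ha1 ha2 hb1 hb2
    have hA2 := abs_le.mp ha2
    have hB2 := abs_le.mp hb2
    have haneg : a ≤ -1 := by rcases le_abs.mp ha1 with h | h <;> omega
    have hb' : b = (b.toNat : ℤ) := by omega
    have hmem : (a, ((b.toNat : ℕ) : ℤ)) ∈ s := by rwa [← hb']
    have hdag := spmDag_eq (m := m) hfun hmem
    have hle := hDagLe b.toNat (by omega) (by omega)
    rw [hdag] at hle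
    unfold ordM at hle
    rw [if_neg (by omega)] at hle
    have : (-a).toNat ≤ m := by omega
    omega
  have pos1 : ∀ a b : ℤ, (a, b) ∈ s → 1 ≤ a → 1 ≤ b := by
    intro a b hab hapos
    obtain ⟨⟨ha1, ha2⟩, hb1, hb2⟩ := hbd _ hab
    simp only at ha1 ha2 hb1 hb2
    by_contra hbneg
    push_neg at hbneg
    have hb' : b ≤ -1 := by rcases le_abs.mp hb1 with h | h <;> omega
    have := pos2 (-a) (-b) (hneg _ hab) (by omega)
    omega
  -- the hit set
  set K : Finset ℕ := (Finset.Icc 1 n).filter (fun j => ∃ a : ℤ, (a, (j : ℤ)) ∈ s) with hK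
  obtain ⟨k, hk⟩ : ∃ k : ℕ, k = K.sup id := ⟨_, rfl⟩
  have hKmem : ∀ j : ℕ, j ∈ K ↔ (1 ≤ j ∧ j ≤ n ∧ ∃ a : ℤ, (a, (j : ℤ)) ∈ s) := by
    intro j; simp [hK, Finset.mem_filter, Finset.mem_Icc, and_assoc]
  have hkn : k ≤ n := by
    rw [hk]
    apply Finset.sup_le
    intro j hj
    exact ((hKmem j).mp hj).2.1
  -- downward closure of K
  have hdown : ∀ j : ℕ, 1 ≤ j → j + 1 ∈ K → j ∈ K := by
    intro j hj hj1
    obtain ⟨h1, h2, a, hmem⟩ := (hKmem (j + 1)).mp hj1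
    rw [hKmem]
    refine ⟨hj, by omega, ?_⟩
    by_contra hno
    push_neg at hno
    have htop : spmDag m s j = m + 1 := spmDag_eq_top hno
    have hapos : 1 ≤ a := pos2 a _ hmem (by omega)
    obtain ⟨⟨ha1, ha2⟩, _, _⟩ := hbd _ hmem
    simp only at ha1 ha2
    have hA2 := abs_le.mp ha2
    have hdag := spmDag_eq (m := m) hfun hmem
    have := hb j hj h2
    rw [htop, hdag] at this
    unfold ordM at this
    rw [if_pos (by omega)] at this
    omega
  -- K = Icc 1 k
  have hKk : ∀ j : ℕ, 1 ≤ j → j ≤ k → j ∈ K := by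
    intro j hj hjk
    have hKne : K.Nonempty := by
      by_contra hne
      rw [Finset.not_nonempty_iff_eq_empty] at hne
      rw [hne] at hk
      simp at hk
      omega
    obtain ⟨b, hbK, hbk⟩ := Finset.exists_mem_eq_sup K hKne id
    have hkK : k ∈ K := by rw [hk, hbk]; exact hbK
    have key : ∀ d : ℕ, d ≤ k - j → k - d ∈ K := by
      intro d
      induction d with
      | zero => intro _; simpa using hkK
      | succ e ih =>
        intro hd
        have h1 : k - e ∈ K := ih (by omega)
        have h2 : (k - (e + 1)) + 1 = k - e := by omega
        exact hdown _ (by omega) (by rw [h2]; exact h1)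
    have := key (k - j) le_rfl
    have hjeq : k - (k - j) = j := by omega
    rwa [hjeq] at this
  have hKub : ∀ j : ℕ, j ∈ K → j ≤ k := fun j hj => by rw [hk]; exact Finset.le_sup (f := id) hj
  -- values and membership of spmDag on [1,k]
  have hg : ∀ j : ℕ, 1 ≤ j → j ≤ k →
      ((spmDag m s j : ℤ), (j : ℤ)) ∈ s ∧ 1 ≤ spmDag m s j ∧ spmDag m s j ≤ m := by
    intro j hj hjk
    obtain ⟨_, hjn, a, hmem⟩ := (hKmem j).mp (hKk j hj hjk)
    have hapos : 1 ≤ a := pos2 a _ hmem (by omega)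
    obtain ⟨⟨ha1, ha2⟩, _, _⟩ := hbd _ hmem
    simp only at ha1 ha2
    have hA2 := abs_le.mp ha2
    have hdag := spmDag_eq (m := m) hfun hmem
    unfold ordM at hdag
    rw [if_pos (by omega)] at hdag
    have hcast : ((spmDag m s j : ℕ) : ℤ) = a := by omega
    refine ⟨by rw [hcast]; exact hmem, by omega, by omega⟩
  -- strict monotonicity of spmDag on [1,k]
  have hgs : ∀ j : ℕ, 1 ≤ j → j + 1 ≤ k → spmDag m s j < spmDag m s (j + 1) := by
    intro j hj hjk
    obtain ⟨hm1, -, -⟩ := hg j hj (by omega)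
    obtain ⟨hm2, -, -⟩ := hg (j + 1) (by omega) hjk
    rcases lt_or_eq_of_le (hb j hj (by omega)) with h | h
    · exact h
    · exfalso
      have hcast : ((spmDag m s j : ℕ) : ℤ) = ((spmDag m s (j + 1) : ℕ) : ℤ) := by
        exact_mod_cast h
      have h2 := (hfun _ hm1 _ hm2).mp hcast
      simp only [Nat.cast_inj] at h2
      omega
  have hgap : ∀ d j : ℕ, 1 ≤ j → j + d ≤ k → spmDag m s j + d ≤ spmDag m s (j + d) := by
    intro d
    induction d with
    | zero => intro j _ _; simp
    | succ e ih =>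
      intro j hj hjd
      have h1 := ih j hj (by omega)
      have h2 := hgs (j + e) (by omega) (by omega)
      have h3 : j + (e + 1) = (j + e) + 1 := by omega
      rw [h3]; omega
  rcases Nat.eq_zero_or_pos k with hk0 | hk1
  · -- k = 0 : s is empty
    refine ⟨0, by omega, by omega, ?_⟩
    ext ⟨a, b⟩
    simp only [mem_sigmaK]
    constructor
    · intro hmem
      exfalso
      obtain ⟨⟨ha1, ha2⟩, hb1, hb2⟩ := hbd _ hmem
      simp only at ha1 ha2 hb1 hb2
      have hB2 := abs_le.mp hb2
      rcases le_abs.mp hb1 with hbp | hbn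
      · have hjK : b.toNat ∈ K := (hKmem _).mpr ⟨by omega, by omega, a,
          by rw [show ((b.toNat : ℕ) : ℤ) = b by omega]; exact hmem⟩
        have := hKub _ hjK; omega
      · have hmem' := hneg _ hmem
        have hjK : (-b).toNat ∈ K := (hKmem _).mpr ⟨by omega, by omega, -a,
          by rw [show (((-b).toNat : ℕ) : ℤ) = -b by omega]; exact hmem'⟩
        have := hKub _ hjK; omega
    · rintro (⟨t, h1, h2, -⟩ | ⟨t, h1, h2, -⟩) <;> omega
  · -- k ≥ 1
    -- the used set is upward closed
    have hup : ∀ i : ℕ, 1 ≤ i → i + 1 ≤ m → (∃ b, ((i : ℤ), b) ∈ s) →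
        ∃ b, (((i + 1 : ℕ) : ℤ), b) ∈ s := by
      rintro i hi him ⟨b, hmem⟩
      have hbpos : 1 ≤ b := pos1 _ _ hmem (by omega)
      have h1 : spmSharp n s i = ordN n b := spmSharp_eq hfun hmem
      by_contra hno
      push_neg at hno
      have h2 : spmSharp n s (i + 1) = 0 := spmSharp_eq_zero hno
      have h3 := ha i hi him
      unfold ordN at h1
      rw [if_pos (by omega)] at h1
      omega
    have husedAll : ∀ i : ℕ, spmDag m s 1 ≤ i → i ≤ m → ∃ b, ((i : ℤ), b) ∈ s := by
      intro i hgi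
      induction i, hgi using Nat.le_induction with
      | base =>
        intro _
        exact ⟨((1 : ℕ) : ℤ), (hg 1 le_rfl hk1).1⟩
      | succ i hgi ih =>
        intro him
        have hg1 := (hg 1 le_rfl hk1).2.1
        exact hup i (by omega) him (ih (by omega))
    have himg : ∀ i : ℕ, 1 ≤ i → i ≤ m → (∃ b, ((i : ℤ), b) ∈ s) →
        ∃ j : ℕ, 1 ≤ j ∧ j ≤ k ∧ spmDag m s j = i := by
      rintro i hi him ⟨b, hmem⟩
      have hbpos : 1 ≤ b := pos1 _ _ hmem (by omega)
      obtain ⟨-, hb1, hb2⟩ := hbd _ hmem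
      simp only at hb1 hb2
      have hB2 := abs_le.mp hb2
      have hbj : b = ((b.toNat : ℕ) : ℤ) := by omega
      have hjK : b.toNat ∈ K := (hKmem _).mpr ⟨by omega, by omega, (i : ℤ),
        by rw [← hbj]; exact hmem⟩
      refine ⟨b.toNat, by omega, hKub _ hjK, ?_⟩
      have hdag := spmDag_eq (m := m) hfun (show ((i : ℤ), ((b.toNat : ℕ) : ℤ)) ∈ s by
        rw [← hbj]; exact hmem)
      unfold ordM at hdag
      rw [if_pos (by omega)] at hdag
      omega
    have hcard : m + 1 ≤ spmDag m s 1 + k := by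
      have hsub : Finset.Icc (spmDag m s 1) m ⊆
          (Finset.Icc 1 k).image (fun j => spmDag m s j) := by
        intro i hi
        rw [Finset.mem_Icc] at hi
        have hg1 := (hg 1 le_rfl hk1).2.1
        obtain ⟨j, hj1, hjk, hji⟩ := himg i (by omega) hi.2 (husedAll i hi.1 hi.2)
        rw [Finset.mem_image]
        exact ⟨j, Finset.mem_Icc.mpr ⟨hj1, hjk⟩, hji⟩
      have h1 := Finset.card_le_card hsub
      have h2 := Finset.card_image_le (s := Finset.Icc 1 k) (f := fun j => spmDag m s j)
      rw [Nat.card_Icc] at h1 h2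
      have hgm := (hg 1 le_rfl hk1).2.2
      omega
    have hkm : k ≤ m := by
      have h1 := hgap (k - 1) 1 le_rfl (by omega)
      rw [show 1 + (k - 1) = k by omega] at h1
      have h2 := (hg k hk1 le_rfl).2.2
      have h3 := (hg 1 le_rfl hk1).2.1
      omega
    have hval : ∀ j : ℕ, 1 ≤ j → j ≤ k → spmDag m s j = m - k + j := by
      intro j hj hjk
      have h1 := hgap (j - 1) 1 le_rfl (by omega)
      rw [show 1 + (j - 1) = j by omega] at h1
      have h2 := hgap (k - j) j hj (by omega)
      rw [show j + (k - j) = k by omega] at h2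
      have h3 := (hg k hk1 le_rfl).2.2
      have h4 := (hg 1 le_rfl hk1).2.1
      omega
    have hcan : ∀ j : ℕ, 1 ≤ j → j ≤ k → (((m - k + j : ℕ) : ℤ), (j : ℤ)) ∈ s := by
      intro j hj hjk
      have := (hg j hj hjk).1
      rwa [hval j hj hjk] at this
    refine ⟨k, hkm, hkn, ?_⟩
    ext ⟨a, b⟩
    constructor
    · intro hmem
      obtain ⟨⟨ha1, ha2⟩, hb1, hb2⟩ := hbd _ hmem
      simp only at ha1 ha2 hb1 hb2
      have hA2 := abs_le.mp ha2
      have hB2 := abs_le.mp hb2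
      rw [mem_sigmaK]
      rcases le_abs.mp hb1 with hbp | hbn
      · set j := b.toNat with hj
        have hbj : b = (j : ℤ) := by omega
        have hjK : j ∈ K := (hKmem j).mpr ⟨by omega, by omega, a, by rw [← hbj]; exact hmem⟩
        have hjk := hKub j hjK
        have hc := hcan j (by omega) hjk
        have haeq : a = ((m - k + j : ℕ) : ℤ) := (hfun _ hmem _ hc).mpr hbj
        left
        exact ⟨j, by omega, hjk, by rw [haeq]; push_cast; omega, hbj⟩
      · have hmem' := hneg _ hmem
        set j := (-b).toNat with hj
        have hbj : -b = (j : ℤ) := by omega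
        have hjK : j ∈ K := (hKmem j).mpr ⟨by omega, by omega, -a, by rw [← hbj]; exact hmem'⟩
        have hjk := hKub j hjK
        have hc := hcan j (by omega) hjk
        have haeq : -a = ((m - k + j : ℕ) : ℤ) := (hfun _ hmem' _ hc).mpr hbj
        right
        refine ⟨j, by omega, hjk, ?_, by omega⟩
        push_cast at haeq ⊢
        omega
    · intro hmem
      rw [mem_sigmaK] at hmem
      rcases hmem with ⟨t, h1, h2, h3, h4⟩ | ⟨t, h1, h2, h3, h4⟩
      · have hc := hcan t h1 h2
        have hae : a = ((m - k + t : ℕ) : ℤ) := by push_cast; omega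
        rw [hae, h4]; exact hc
      · have hc := hneg _ (hcan t h1 h2)
        have hpe : ((a : ℤ), b) = (-((m - k + t : ℕ) : ℤ), -((t : ℕ) : ℤ)) := by
          rw [Prod.mk.injEq]
          constructor
          · push_cast; omega
          · omega
        rw [hpe]; exact hc


/-- A signed partial matching `σ ∈ SPM(m,n)` satisfies (a) `σ†` is `≤_SPM`-monotone,
(b) `σ_†` is `≤_SPM`-monotone and (c) `σ_†(n) ≤_SPM ∞`, iff `σ = σ_k` for some
`0 ≤ k ≤ min(m,n)`. -/
theorem spm_monotone_iff_sigmaK (m n : ℕ) (hm : 1 ≤ m) (hn : 1 ≤ n)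
    (s : Finset (ℤ × ℤ)) (hs : IsSignedPM m n s) :
    ((∀ i : ℕ, 1 ≤ i → i + 1 ≤ m → spmSharp n s i ≤ spmSharp n s (i + 1)) ∧
     (∀ j : ℕ, 1 ≤ j → j + 1 ≤ n → spmDag m s j ≤ spmDag m s (j + 1)) ∧
     spmDag m s n ≤ m + 1) ↔
    ∃ k, k ≤ m ∧ k ≤ n ∧ s = sigmaK m n k := by
  constructor
  · rintro ⟨ha, hb, hc⟩
    exact spm_forward m n hm hn s hs ha hb hc
  · rintro ⟨k, hkm, hkn, rfl⟩
    have hfun := hs.2.1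
    refine ⟨?_, ?_, ?_⟩
    · intro i hi him
      rw [spmSharp_sigmaK hkm hkn hfun hi (by omega),
          spmSharp_sigmaK hkm hkn hfun (by omega) him]
      omega
    · intro j hj hjn
      rw [spmDag_sigmaK_le hkm hkn hfun hj (by omega),
          spmDag_sigmaK_le hkm hkn hfun (by omega) hjn]
      split_ifs <;> omega
    · rw [spmDag_sigmaK_le hkm hkn hfun hn le_rfl]
      split_ifs <;> omega
end

section
/- Let F be a field, m, n ≥ 1, and (I, J) ∈ PP(m,n). Consider the perfect pairing Mat_{n×m}(F) × Mat_{m×n}(F) → F given by (T₁, T₂) ↦ tr(T₁ T₂). Then the annihilator of the staircase subspace L̄₁^{(I,J)} ⊆ Mat_{n×m}(F) with respect to this pairing equals the staircase subspace L̄₂^{(Q,P)} ⊆ Mat_{m×n}(F), where (Q, P) = (J_{+1} ∪ {1}, I_{−1} ∪ {m}) if 1 ∉ I and n ∉ J; (Q, P) = (J_{+1} ∖ {1}, I_{−1} ∖ {m}) if 1 ∈ I and n ∈ J; and (Q, P) = (J_{+1}, I_{−1}) otherwise. -/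
open Matrix

/-- For `I = {i₁ < ⋯ < i_k}` and `J = {j₁ < ⋯ < j_k}`, the bound on the rows allowed
in column `lam` (1-indexed) of a staircase matrix: it is `j_l` when `i_l ≤ lam < i_{l+1}`
(where `l = #{i ∈ I : i ≤ lam}`), and `0` when `lam < i₁`. -/
def stairBound (I J : Finset ℕ) (lam : ℕ) : ℕ :=
  if (I.filter (· ≤ lam)).card = 0 then 0
  else (J.sort (· ≤ ·)).getD ((I.filter (· ≤ lam)).card - 1) 0

/-- The staircase subspace `L̄₁^{(I,J)} ⊆ Mat_{n×m}(F)` (rows and columns 0-indexed):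
column `lam` vanishes below row `j_l`, where `l = #{i ∈ I : i ≤ lam+1}`. -/
def stair (F : Type*) [Zero F] (m n : ℕ) (I J : Finset ℕ) :
    Set (Matrix (Fin n) (Fin m) F) :=
  {T | ∀ (a : Fin n) (lam : Fin m),
    stairBound I J ((lam : ℕ) + 1) < (a : ℕ) + 1 → T a lam = 0}

/-- Cyclic shift `X_{+1}` of a subset of `{1,…,N}` (with the convention `N+1 ≡ 1`). -/
def shiftUp (N : ℕ) (X : Finset ℕ) : Finset ℕ :=
  X.image fun x => if x = N then 1 else x + 1

/-- Cyclic shift `X_{-1}` of a subset of `{1,…,N}` (with the convention `0 ≡ N`). -/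
def shiftDown (N : ℕ) (X : Finset ℕ) : Finset ℕ :=
  X.image fun x => if x = 1 then N else x - 1

/-! A staircase space is spanned by matrix units, so its annihilator under the trace pairing is
spanned by the matrix units at the transposes of the positions it omits; the theorem says that
the staircase patterns of `(I, J)` and `(Q, P)` are complementary up to transposition.
For `l ≥ 1` the `l`-th element of `J` is at least `a` iff fewer than `l` elements of `J` are
below `a`, so entry `(a, λ)` lies in the pattern of `(I, J)` iff
`#{j ∈ J | j < a} < #{i ∈ I | i ≤ λ}`. The cyclic shifts give
`#{q ∈ Q | q ≤ a} = #{j ∈ J | j < a} + [1 ∉ I]` and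
`#{p ∈ P | p < λ} + [1 ∈ I] = #{i ∈ I | i ≤ λ}`, which turns the condition for `(Q, P)`
into the negation of the one for `(I, J)`. -/

open Finset

theorem Nat.le_nth_iff_count_le {p : ℕ → Prop} [DecidablePred p] {a k : ℕ}
    (hk : ∀ hf : (Set.ofPred p).Finite, k < hf.toFinset.card) :
    a ≤ Nat.nth p k ↔ Nat.count p a ≤ k := by
  refine ⟨Nat.le_nth_of_count_le, fun h => not_lt.1 fun hlt => ?_⟩
  have := Nat.count_monotone p (Nat.succ_le_of_lt hlt)
  rw [Nat.count_nth_succ hk] at this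
  omega

theorem Nat.count_mem_eq_card_filter_lt (s : Finset ℕ) (a : ℕ) :
    Nat.count (· ∈ s) a = (s.filter (· < a)).card := by
  rw [Nat.count_eq_card_filter_range]
  congr 1
  ext x
  simp [and_comm]

theorem Finset.sort_getD_eq_nth (s : Finset ℕ) (k : ℕ) :
    (s.sort (· ≤ ·)).getD k 0 = Nat.nth (· ∈ s) k := by
  have hf : (Set.ofPred (· ∈ s)).Finite := s.finite_toSet
  rw [Nat.nth_eq_getD_sort hf]
  simp

theorem le_stairBound_iff {I J : Finset ℕ} (hIJ : I.card ≤ J.card) {a : ℕ} (ha : 1 ≤ a)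
    (L : ℕ) :
    a ≤ stairBound I J L ↔ (J.filter (· < a)).card < (I.filter (· ≤ L)).card := by
  have hl := (card_filter_le I (· ≤ L)).trans hIJ
  unfold stairBound
  split_ifs with hl0
  · omega
  · rw [sort_getD_eq_nth, Nat.le_nth_iff_count_le, Nat.count_mem_eq_card_filter_lt]
    · omega
    · intro hf
      simp only [SetLike.setOfPred_mem_eq, Set.toFinite_toFinset, toFinset_coe]
      omega

section Shift

variable {N : ℕ} {X : Finset ℕ}

theorem shiftUp_injOn (hX : X ⊆ Finset.Icc 1 N) :
    Set.InjOn (fun x => if x = N then 1 else x + 1) X := by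
  intro x hx y hy h
  have := mem_Icc.mp (hX hx)
  have := mem_Icc.mp (hX hy)
  dsimp only at h
  split_ifs at h <;> omega

theorem shiftDown_injOn (hX : X ⊆ Finset.Icc 1 N) :
    Set.InjOn (fun x => if x = 1 then N else x - 1) X := by
  intro x hx y hy h
  have := mem_Icc.mp (hX hx)
  have := mem_Icc.mp (hX hy)
  dsimp only at h
  split_ifs at h <;> omega

theorem card_shiftUp (hX : X ⊆ Finset.Icc 1 N) : (shiftUp N X).card = X.card :=
  card_image_of_injOn (shiftUp_injOn hX)

theorem card_shiftDown (hX : X ⊆ Finset.Icc 1 N) : (shiftDown N X).card = X.card :=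
  card_image_of_injOn (shiftDown_injOn hX)

theorem one_mem_shiftUp_iff (hX : X ⊆ Finset.Icc 1 N) : 1 ∈ shiftUp N X ↔ N ∈ X := by
  refine ⟨fun h => ?_, fun h => mem_image.mpr ⟨N, h, if_pos rfl⟩⟩
  obtain ⟨x, hx, hx1⟩ := mem_image.mp h
  have := mem_Icc.mp (hX hx)
  split_ifs at hx1 with hxN
  · exact hxN ▸ hx
  · omega

theorem self_mem_shiftDown_iff (hX : X ⊆ Finset.Icc 1 N) : N ∈ shiftDown N X ↔ 1 ∈ X := by
  refine ⟨fun h => ?_, fun h => mem_image.mpr ⟨1, h, if_pos rfl⟩⟩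
  obtain ⟨x, hx, hxN⟩ := mem_image.mp h
  have := mem_Icc.mp (hX hx)
  split_ifs at hxN with hx1
  · exact hx1 ▸ hx
  · omega

theorem card_filter_le_shiftUp (hX : X ⊆ Finset.Icc 1 N) {A : ℕ} (hA : 1 ≤ A)
    (hAN : A ≤ N) :
    ((shiftUp N X).filter (· ≤ A)).card
      = (X.filter (· < A)).card + if N ∈ X then 1 else 0 := by
  have hfilter : X.filter (fun x => (if x = N then 1 else x + 1) ≤ A)
      = X.filter (· < A) ∪ X.filter (· = N) := by
    rw [← filter_or]
    refine filter_congr fun x hx => ?_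
    have := mem_Icc.mp (hX hx)
    split_ifs <;> omega
  rw [shiftUp, filter_image,
    card_image_of_injOn ((shiftUp_injOn hX).mono (filter_subset _ _)), hfilter,
    card_union_of_disjoint (disjoint_filter.mpr fun x _ h => by omega),
    filter_eq']
  split_ifs <;> simp

theorem card_filter_lt_shiftDown (hX : X ⊆ Finset.Icc 1 N) {L : ℕ} (hL : 1 ≤ L)
    (hLN : L ≤ N) :
    ((shiftDown N X).filter (· < L)).card + (if 1 ∈ X then 1 else 0)
      = (X.filter (· ≤ L)).card := by
  have hfilter : X.filter (· ≤ L)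
      = X.filter (fun x => (if x = 1 then N else x - 1) < L) ∪ X.filter (· = 1) := by
    rw [← filter_or]
    refine filter_congr fun x hx => ?_
    have := mem_Icc.mp (hX hx)
    split_ifs <;> omega
  rw [shiftDown, filter_image,
    card_image_of_injOn ((shiftDown_injOn hX).mono (filter_subset _ _)), hfilter,
    card_union_of_disjoint (disjoint_filter.mpr fun x hx h => ?_),
    filter_eq']
  · split_ifs <;> simp
  · have := mem_Icc.mp (hX hx)
    split_ifs at h <;> omega

end Shift

section Dual

variable (m n : ℕ) (I J : Finset ℕ)

def dualQ : Finset ℕ :=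
  if 1 ∈ I ∧ n ∈ J then shiftUp n J \ {1}
  else if 1 ∉ I ∧ n ∉ J then shiftUp n J ∪ {1} else shiftUp n J

def dualP : Finset ℕ :=
  if 1 ∈ I ∧ n ∈ J then shiftDown m I \ {m}
  else if 1 ∉ I ∧ n ∉ J then shiftDown m I ∪ {m} else shiftDown m I

variable {m n I J}

theorem card_dualQ_eq_card_dualP (hI : I ⊆ Finset.Icc 1 m) (hJ : J ⊆ Finset.Icc 1 n)
    (hcard : I.card = J.card) : (dualQ n I J).card = (dualP m n I J).card := by
  have := one_mem_shiftUp_iff hJ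
  have := self_mem_shiftDown_iff hI
  have := card_shiftUp hJ
  have := card_shiftDown hI
  unfold dualQ dualP
  split_ifs
  · rw [card_sdiff_of_subset, card_sdiff_of_subset] <;> simp_all
  · rw [card_union_of_disjoint, card_union_of_disjoint] <;> simp_all
  · omega

theorem card_filter_le_dualQ (hJ : J ⊆ Finset.Icc 1 n) {A : ℕ} (hA : 1 ≤ A) (hAn : A ≤ n) :
    ((dualQ n I J).filter (· ≤ A)).card
      = (J.filter (· < A)).card + if 1 ∈ I then 0 else 1 := by
  have hup := card_filter_le_shiftUp hJ hA hAn
  have h1 : 1 ∈ (shiftUp n J).filter (· ≤ A) ↔ n ∈ J := by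
    simp [one_mem_shiftUp_iff hJ, hA]
  by_cases hI1 : 1 ∈ I <;> by_cases hJn : n ∈ J <;> simp only [hJn, if_true, if_false] at hup
  · rw [dualQ, if_pos ⟨hI1, hJn⟩, sdiff_singleton_eq_erase, filter_erase,
      card_erase_of_mem (h1.mpr hJn), hup, if_pos hI1, Nat.add_sub_cancel, Nat.add_zero]
  · rw [dualQ, if_neg (by tauto), if_neg (by tauto), hup, if_pos hI1]
  · rw [dualQ, if_neg (by tauto), if_neg (by tauto), hup, if_neg hI1]
  · rw [dualQ, if_neg (by tauto), if_pos ⟨hI1, hJn⟩, filter_union,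
      filter_singleton, if_pos hA,
      card_union_of_disjoint (disjoint_singleton_right.mpr (mt h1.mp hJn)), hup,
      if_neg hI1, card_singleton]

theorem card_filter_lt_dualP (hI : I ⊆ Finset.Icc 1 m) {L : ℕ} (hL : 1 ≤ L) (hLm : L ≤ m) :
    ((dualP m n I J).filter (· < L)).card + (if 1 ∈ I then 1 else 0)
      = (I.filter (· ≤ L)).card := by
  have hmL : ¬ m < L := by omega
  rw [← card_filter_lt_shiftDown hI hL hLm, dualP]
  congr 2
  split_ifs
  · rw [sdiff_singleton_eq_erase, filter_erase,
      erase_eq_of_notMem (by simp [hmL])]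
  · rw [filter_union, filter_singleton, if_neg hmL, union_empty]
  · rfl

theorem stairBound_lt_iff_le_stairBound_dual (hI : I ⊆ Finset.Icc 1 m)
    (hJ : J ⊆ Finset.Icc 1 n) (hcard : I.card = J.card) {A L : ℕ} (hA : 1 ≤ A) (hAn : A ≤ n)
    (hL : 1 ≤ L) (hLm : L ≤ m) :
    stairBound I J L < A ↔ L ≤ stairBound (dualQ n I J) (dualP m n I J) A := by
  rw [← not_le, le_stairBound_iff hcard.le hA,
    le_stairBound_iff (card_dualQ_eq_card_dualP hI hJ hcard).le hL, card_filter_le_dualQ hJ hA hAn]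
  have := card_filter_lt_dualP (n := n) (J := J) hI hL hLm
  split_ifs at * <;> omega

end Dual

namespace Matrix

variable {ι κ R : Type*}

def supportedOn (R : Type*) [Zero R] (S : ι → κ → Prop) : Set (Matrix ι κ R) :=
  {A | ∀ i j, ¬ S i j → A i j = 0}

theorem annihilator_supportedOn [Fintype ι] [Fintype κ] [DecidableEq ι] [DecidableEq κ]
    [Semiring R] (S : ι → κ → Prop) :
    {B : Matrix κ ι R | ∀ A ∈ supportedOn R S, (A * B).trace = 0}
      = supportedOn R (fun j i => ¬ S i j) := by
  ext B
  refine ⟨fun hB j i hS => ?_, fun hB A hA => ?_⟩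
  · have hsingle : single i j (1 : R) ∈ supportedOn R S := fun i' j' hS' =>
      single_apply_of_ne _ _ _ _ _ fun ⟨hi, hj⟩ => hS' (hi ▸ hj ▸ not_not.mp hS)
    simpa [trace_single_mul] using hB _ hsingle
  · refine sum_eq_zero fun i _ => sum_eq_zero fun j _ => ?_
    change A i j * B j i = 0
    by_cases hS : S i j
    · rw [hB j i (not_not.mpr hS), mul_zero]
    · rw [hA i j hS, zero_mul]

end Matrix

theorem stair_eq_supportedOn (F : Type*) [Zero F] (m n : ℕ) (I J : Finset ℕ) :
    stair F m n I J
      = Matrix.supportedOn F fun (a : Fin n) (c : Fin m) =>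
          (a : ℕ) + 1 ≤ stairBound I J (c + 1) := by
  ext T
  simp only [stair, Matrix.supportedOn, Set.mem_ofPred_eq, not_le]

theorem annihilator_stair_general (F : Type*) [Field F] (m n : ℕ)
    (I J : Finset ℕ) (hI : I ⊆ Finset.Icc 1 m) (hJ : J ⊆ Finset.Icc 1 n)
    (hcard : I.card = J.card) :
    {T₂ : Matrix (Fin m) (Fin n) F | ∀ T₁ ∈ stair F m n I J, (T₁ * T₂).trace = 0} =
      stair F n m
        (if 1 ∈ I ∧ n ∈ J then shiftUp n J \ {1}
          else if 1 ∉ I ∧ n ∉ J then shiftUp n J ∪ {1} else shiftUp n J)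
        (if 1 ∈ I ∧ n ∈ J then shiftDown m I \ {m}
          else if 1 ∉ I ∧ n ∉ J then shiftDown m I ∪ {m} else shiftDown m I) := by
  change _ = stair F n m (dualQ n I J) (dualP m n I J)
  rw [stair_eq_supportedOn, Matrix.annihilator_supportedOn, stair_eq_supportedOn]
  congr! 3 with c a
  rw [not_le, stairBound_lt_iff_le_stairBound_dual hI hJ hcard] <;> omega

/-- The annihilator of the staircase subspace `L̄₁^{(I,J)} ⊆ Mat_{n×m}(F)` under the
trace pairing `(T₁, T₂) ↦ tr(T₁T₂)` is the staircase subspace `L̄₂^{(Q,P)} ⊆ Mat_{m×n}(F)`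
where `(Q,P) = (J_{+1} ∪ {1}, I_{-1} ∪ {m})` if `1 ∉ I` and `n ∉ J`;
`(Q,P) = (J_{+1} ∖ {1}, I_{-1} ∖ {m})` if `1 ∈ I` and `n ∈ J`;
and `(Q,P) = (J_{+1}, I_{-1})` otherwise. -/
theorem annihilator_stair (F : Type*) [Field F] (m n : ℕ) (hm : 1 ≤ m) (hn : 1 ≤ n)
    (I J : Finset ℕ) (hI : I ⊆ Finset.Icc 1 m) (hJ : J ⊆ Finset.Icc 1 n)
    (hcard : I.card = J.card) :
    {T₂ : Matrix (Fin m) (Fin n) F | ∀ T₁ ∈ stair F m n I J, (T₁ * T₂).trace = 0} =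
      stair F n m
        (if 1 ∈ I ∧ n ∈ J then shiftUp n J \ {1}
          else if 1 ∉ I ∧ n ∉ J then shiftUp n J ∪ {1} else shiftUp n J)
        (if 1 ∈ I ∧ n ∈ J then shiftDown m I \ {m}
          else if 1 ∉ I ∧ n ∉ J then shiftDown m I ∪ {m} else shiftDown m I) :=
  annihilator_stair_general F m n I J hI hJ hcard
end

section
/- Let F be a finite field with q elements, ψ : F → ℂ^× a nontrivial additive character, and m, n ≥ 0; let FT be the Fourier transform FT(f)(T₂) = q^{−mn/2} Σ_{T₁ ∈ Mat_{n×m}(F)} f(T₁) ψ(tr(T₁ T₂)). Let B₁ ⊆ GL_m(F) and B₂ ⊆ GL_n(F) be the subgroups of invertible upper-triangular matrices. Then: (1) FT restricts to a linear bijection from the space of functions f : Mat_{n×m}(F) → ℂ satisfying f(b₂⁻¹ T b₁) = f(T) for all b₁ ∈ B₁, b₂ ∈ B₂, onto the space of functions f′ : Mat_{m×n}(F) → ℂ satisfying f′(b₁⁻¹ T′ b₂) = f′(T′) for all b₁ ∈ B₁, b₂ ∈ B₂; and (2) FT intertwines the Hecke convolution actions: for every h₁ : GL_m(F) → ℂ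 with h₁(b g b′) = h₁(g) for all b, b′ ∈ B₁ and every h₂ : GL_n(F) → ℂ with h₂(b g b′) = h₂(g) for all b, b′ ∈ B₂, one has FT((h₁, h₂)·f) = (h₁, h₂)·FT(f), where ((h₁, h₂)·f)(T) := |B₁|⁻¹ |B₂|⁻¹ Σ_{g₁ ∈ GL_m(F)} Σ_{g₂ ∈ GL_n(F)} h₁(g₁) h₂(g₂) f(g₂⁻¹ T g₁), and the action on functions on Mat_{m×n}(F) is defined by the same formula with f(g₂⁻¹ T g₁) replaced by f′(g₁⁻¹ T′ g₂). -/
open Matrix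
open scoped MatrixGroups

/-- The normalized finite Fourier transform
`FT(f)(T₂) = q^{-mn/2} ∑_{T₁} f(T₁) ψ(tr(T₁ T₂))`. -/
noncomputable def FTmat {F : Type*} [Field F] [Fintype F] [DecidableEq F] {m n : ℕ}
    (ψ : AddChar F ℂ) (f : Matrix (Fin n) (Fin m) F → ℂ) :
    Matrix (Fin m) (Fin n) F → ℂ := fun T₂ =>
  (((Fintype.card F : ℝ) ^ (-((m : ℝ) * (n : ℝ)) / 2) : ℝ) : ℂ) *
    ∑ T₁ : Matrix (Fin n) (Fin m) F, f T₁ * ψ ((T₁ * T₂).trace)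

/-- Functions on `Mat_{n×m}(F)` invariant under the Borels:
`f(b₂⁻¹ T b₁) = f(T)` for all invertible upper-triangular `b₁, b₂`. -/
def borelInvL (F : Type*) [Field F] (m n : ℕ) : Set (Matrix (Fin n) (Fin m) F → ℂ) :=
  {f | ∀ (b₁ : Matrix (Fin m) (Fin m) F) (b₂ : Matrix (Fin n) (Fin n) F),
    IsUnit b₁ → IsUnit b₂ → b₁.BlockTriangular id → b₂.BlockTriangular id →
    ∀ T, f (b₂⁻¹ * T * b₁) = f T}

/-- Functions on `Mat_{m×n}(F)` invariant under the Borels: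
`f'(b₁⁻¹ T' b₂) = f'(T')` for all invertible upper-triangular `b₁, b₂`. -/
def borelInvR (F : Type*) [Field F] (m n : ℕ) : Set (Matrix (Fin m) (Fin n) F → ℂ) :=
  {f | ∀ (b₁ : Matrix (Fin m) (Fin m) F) (b₂ : Matrix (Fin n) (Fin n) F),
    IsUnit b₁ → IsUnit b₂ → b₁.BlockTriangular id → b₂.BlockTriangular id →
    ∀ T, f (b₁⁻¹ * T * b₂) = f T}

noncomputable instance {F : Type*} [Field F] [Fintype F] [DecidableEq F] {m : ℕ} :
    Fintype (GL (Fin m) F) :=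
  inferInstanceAs (Fintype (Matrix (Fin m) (Fin m) F)ˣ)

/-- The cardinality of the Borel subgroup (invertible upper-triangular matrices)
of `GL_m(F)`, as a complex number. -/
noncomputable def borelCard (F : Type*) [Field F] (m : ℕ) : ℂ :=
  (Nat.card {b : GL (Fin m) F // (↑b : Matrix (Fin m) (Fin m) F).BlockTriangular id} : ℂ)

/-- The Hecke convolution action on functions on `Mat_{n×m}(F)`:
`((h₁,h₂)·f)(T) = |B₁|⁻¹|B₂|⁻¹ ∑_{g₁,g₂} h₁(g₁) h₂(g₂) f(g₂⁻¹ T g₁)`. -/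
noncomputable def heckeConvL {F : Type*} [Field F] [Fintype F] [DecidableEq F] {m n : ℕ}
    (h₁ : GL (Fin m) F → ℂ) (h₂ : GL (Fin n) F → ℂ)
    (f : Matrix (Fin n) (Fin m) F → ℂ) : Matrix (Fin n) (Fin m) F → ℂ := fun T =>
  (borelCard F m)⁻¹ * (borelCard F n)⁻¹ *
    ∑ g₁ : GL (Fin m) F, ∑ g₂ : GL (Fin n) F,
      h₁ g₁ * h₂ g₂ *
        f ((↑(g₂⁻¹) : Matrix (Fin n) (Fin n) F) * T * (↑g₁ : Matrix (Fin m) (Fin m) F))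

/-- The Hecke convolution action on functions on `Mat_{m×n}(F)`. -/
noncomputable def heckeConvR {F : Type*} [Field F] [Fintype F] [DecidableEq F] {m n : ℕ}
    (h₁ : GL (Fin m) F → ℂ) (h₂ : GL (Fin n) F → ℂ)
    (f : Matrix (Fin m) (Fin n) F → ℂ) : Matrix (Fin m) (Fin n) F → ℂ := fun T =>
  (borelCard F m)⁻¹ * (borelCard F n)⁻¹ *
    ∑ g₁ : GL (Fin m) F, ∑ g₂ : GL (Fin n) F,
      h₁ g₁ * h₂ g₂ *
        f ((↑(g₁⁻¹) : Matrix (Fin m) (Fin m) F) * T * (↑g₂ : Matrix (Fin n) (Fin n) F))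


section AuxLemmas

variable {F : Type*} [Field F] [Fintype F] [DecidableEq F]

set_option linter.unusedSectionVars false

lemma card_mat (a b : ℕ) : Fintype.card (Matrix (Fin a) (Fin b) F)
    = Fintype.card F ^ (a * b) := by
  rw [show Fintype.card (Matrix (Fin a) (Fin b) F)
      = Fintype.card (Fin a → Fin b → F) from rfl]
  simp [pow_mul]
  ring

lemma ft_const_sq (m n : ℕ) :
    (((Fintype.card F : ℝ) ^ (-((m : ℝ) * (n : ℝ)) / 2) : ℝ) : ℂ) *
      (((Fintype.card F : ℝ) ^ (-((n : ℝ) * (m : ℝ)) / 2) : ℝ) : ℂ) *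
      (Fintype.card (Matrix (Fin m) (Fin n) F) : ℂ) = 1 := by
  have hq : (0 : ℝ) < (Fintype.card F : ℝ) := by
    exact_mod_cast Fintype.card_pos
  rw [card_mat]
  have h1 : ((Fintype.card F : ℝ) ^ (-((m : ℝ) * (n : ℝ)) / 2)) *
      ((Fintype.card F : ℝ) ^ (-((n : ℝ) * (m : ℝ)) / 2)) *
      ((Fintype.card F : ℝ) ^ (m * n : ℕ)) = 1 := by
    rw [← Real.rpow_natCast _ (m * n), ← Real.rpow_add hq, ← Real.rpow_add hq]
    rw [show -((m : ℝ) * (n : ℝ)) / 2 + -((n : ℝ) * (m : ℝ)) / 2 + ((m * n : ℕ) : ℝ)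
      = 0 by push_cast; ring]
    exact Real.rpow_zero _
  rw [show ((Fintype.card F ^ (m * n) : ℕ) : ℂ)
      = (((Fintype.card F : ℝ) ^ (m * n) : ℝ) : ℂ) by push_cast; rfl]
  rw [← Complex.ofReal_mul, ← Complex.ofReal_mul, h1, Complex.ofReal_one]

lemma sum_char_comp_eq_zero {M : Type*} [AddCommGroup M] [Fintype M]
    (ψ : AddChar F ℂ) (φ : M → F) (hadd : ∀ x y, φ (x + y) = φ x + φ y)
    (E : M) (hE : ψ (φ E) ≠ 1) : ∑ x : M, ψ (φ x) = 0 := by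
  have key : (∑ x : M, ψ (φ x)) * ψ (φ E) = ∑ x : M, ψ (φ x) := by
    rw [Finset.sum_mul]
    calc ∑ x : M, ψ (φ x) * ψ (φ E) = ∑ x : M, ψ (φ (x + E)) := by
          simp [hadd, AddChar.map_add_eq_mul]
      _ = ∑ x : M, ψ (φ x) :=
          Fintype.sum_equiv (Equiv.addRight E) _ _ (fun x => rfl)
  have h2 : (∑ x : M, ψ (φ x)) * (ψ (φ E) - 1) = 0 := by
    rw [mul_sub, key, mul_one, sub_self]
  rcases mul_eq_zero.mp h2 with h | h
  · exact h
  · exact absurd (sub_eq_zero.mp h) hE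

lemma trace_mul_stdBasisMatrix {a b : ℕ} (A : Matrix (Fin a) (Fin b) F)
    (i : Fin a) (j : Fin b) (x : F) :
    (A * Matrix.single j i x).trace = A i j * x := by
  simp only [Matrix.trace, Matrix.diag, Matrix.mul_apply, Matrix.single,
    Matrix.of_apply, mul_ite, mul_zero]
  rw [Finset.sum_comm]
  rw [Finset.sum_eq_single j, Finset.sum_eq_single i] <;> simp +contextual [eq_comm]

lemma sum_psi_trace_mul (ψ : AddChar F ℂ) (hψ : ∃ a, ψ a ≠ 1) {a b : ℕ}
    (A : Matrix (Fin a) (Fin b) F) (hA : A ≠ 0) :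
    ∑ T : Matrix (Fin b) (Fin a) F, ψ ((A * T).trace) = 0 := by
  obtain ⟨c, hc⟩ := hψ
  have hij : ∃ i j, A i j ≠ 0 := by
    by_contra h
    push_neg at h
    exact hA (Matrix.ext fun i j => h i j)
  obtain ⟨i, j, hij⟩ := hij
  refine sum_char_comp_eq_zero ψ (fun T => (A * T).trace)
    (fun x y => by simp [Matrix.mul_add]) (Matrix.single j i ((A i j)⁻¹ * c)) ?_
  show ψ ((A * Matrix.single j i ((A i j)⁻¹ * c)).trace) ≠ 1
  rw [trace_mul_stdBasisMatrix, ← mul_assoc, mul_inv_cancel₀ hij, one_mul]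
  exact hc

lemma FTmat_equivariant (ψ : AddChar F ℂ) {m n : ℕ} (f : Matrix (Fin n) (Fin m) F → ℂ)
    (g₁ : Matrix (Fin m) (Fin m) F) (g₂ : Matrix (Fin n) (Fin n) F)
    (h₁ : IsUnit g₁) (h₂ : IsUnit g₂) (T₂ : Matrix (Fin m) (Fin n) F) :
    FTmat ψ (fun T => f (g₂⁻¹ * T * g₁)) T₂ = FTmat ψ f (g₁⁻¹ * T₂ * g₂) := by
  have hd₁ : IsUnit g₁.det := (Matrix.isUnit_iff_isUnit_det g₁).mp h₁
  have hd₂ : IsUnit g₂.det := (Matrix.isUnit_iff_isUnit_det g₂).mp h₂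
  unfold FTmat
  congr 1
  refine (Fintype.sum_equiv
    (⟨fun S => g₂ * S * g₁⁻¹, fun T => g₂⁻¹ * T * g₁, ?_, ?_⟩ :
      Matrix (Fin n) (Fin m) F ≃ Matrix (Fin n) (Fin m) F) _ _ ?_).symm
  · intro S
    show g₂⁻¹ * (g₂ * S * g₁⁻¹) * g₁ = S
    rw [Matrix.mul_assoc g₂ S, Matrix.nonsing_inv_mul_cancel_left _ _ hd₂,
      Matrix.nonsing_inv_mul_cancel_right _ _ hd₁]
  · intro T
    show g₂ * (g₂⁻¹ * T * g₁) * g₁⁻¹ = T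
    rw [Matrix.mul_assoc g₂⁻¹ T, Matrix.mul_nonsing_inv_cancel_left _ _ hd₂,
      Matrix.mul_nonsing_inv_cancel_right _ _ hd₁]
  · intro S
    show f S * ψ ((S * (g₁⁻¹ * T₂ * g₂)).trace)
        = f (g₂⁻¹ * (g₂ * S * g₁⁻¹) * g₁) * ψ (((g₂ * S * g₁⁻¹) * T₂).trace)
    rw [Matrix.mul_assoc g₂ S, Matrix.nonsing_inv_mul_cancel_left _ _ hd₂,
      Matrix.nonsing_inv_mul_cancel_right _ _ hd₁]
    congr 2
    rw [show g₂ * (S * g₁⁻¹) * T₂ = g₂ * (S * g₁⁻¹ * T₂) by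
      simp only [Matrix.mul_assoc], Matrix.trace_mul_comm g₂ (S * g₁⁻¹ * T₂)]
    simp only [Matrix.mul_assoc]

/-- The inverse Fourier transform. -/
noncomputable def FTinv (ψ : AddChar F ℂ) {m n : ℕ}
    (g : Matrix (Fin m) (Fin n) F → ℂ) : Matrix (Fin n) (Fin m) F → ℂ :=
  FTmat (-ψ) g

lemma FTinv_FTmat (ψ : AddChar F ℂ) (hψ : ∃ a, ψ a ≠ 1) {m n : ℕ}
    (f : Matrix (Fin n) (Fin m) F → ℂ) : FTinv ψ (FTmat ψ f) = f := by
  funext T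
  have horth : ∀ T₁ : Matrix (Fin n) (Fin m) F,
      ∑ T₂ : Matrix (Fin m) (Fin n) F, ψ (((T₁ - T) * T₂).trace)
      = if T₁ = T then (Fintype.card (Matrix (Fin m) (Fin n) F) : ℂ) else 0 := by
    intro T₁
    split_ifs with h
    · subst h
      simp [Finset.card_univ]
    · exact sum_psi_trace_mul ψ hψ _ (sub_ne_zero.mpr h)
  show (((Fintype.card F : ℝ) ^ (-((n : ℝ) * (m : ℝ)) / 2) : ℝ) : ℂ) *
      (∑ T₂ : Matrix (Fin m) (Fin n) F, FTmat ψ f T₂ * (-ψ) ((T₂ * T).trace)) = f T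
  have step1 : ∑ T₂ : Matrix (Fin m) (Fin n) F, FTmat ψ f T₂ * (-ψ) ((T₂ * T).trace)
      = (((Fintype.card F : ℝ) ^ (-((m : ℝ) * (n : ℝ)) / 2) : ℝ) : ℂ) *
        ∑ T₁ : Matrix (Fin n) (Fin m) F, f T₁ *
          ∑ T₂ : Matrix (Fin m) (Fin n) F, ψ (((T₁ - T) * T₂).trace) := by
    unfold FTmat
    calc ∑ T₂ : Matrix (Fin m) (Fin n) F,
          ((((Fintype.card F : ℝ) ^ (-((m : ℝ) * (n : ℝ)) / 2) : ℝ) : ℂ) *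
            ∑ T₁ : Matrix (Fin n) (Fin m) F, f T₁ * ψ ((T₁ * T₂).trace)) *
              (-ψ) ((T₂ * T).trace)
        = (((Fintype.card F : ℝ) ^ (-((m : ℝ) * (n : ℝ)) / 2) : ℝ) : ℂ) *
          ∑ T₂ : Matrix (Fin m) (Fin n) F, ∑ T₁ : Matrix (Fin n) (Fin m) F,
            f T₁ * ψ ((T₁ * T₂).trace) * (-ψ) ((T₂ * T).trace) := by
          rw [Finset.mul_sum]
          exact Finset.sum_congr rfl fun T₂ _ => by rw [mul_assoc, Finset.sum_mul]
      _ = (((Fintype.card F : ℝ) ^ (-((m : ℝ) * (n : ℝ)) / 2) : ℝ) : ℂ) *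
          ∑ T₁ : Matrix (Fin n) (Fin m) F, ∑ T₂ : Matrix (Fin m) (Fin n) F,
            f T₁ * ψ ((T₁ * T₂).trace) * (-ψ) ((T₂ * T).trace) := by
          rw [Finset.sum_comm]
      _ = _ := by
          congr 1
          refine Finset.sum_congr rfl fun T₁ _ => ?_
          rw [Finset.mul_sum]
          refine Finset.sum_congr rfl fun T₂ _ => ?_
          rw [mul_assoc]
          congr 1
          rw [AddChar.neg_apply, ← AddChar.map_add_eq_mul]
          congr 1
          rw [Matrix.sub_mul, Matrix.trace_sub, Matrix.trace_mul_comm T₂ T]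
          ring
  rw [step1]
  have step2 : ∑ T₁ : Matrix (Fin n) (Fin m) F, f T₁ *
      ∑ T₂ : Matrix (Fin m) (Fin n) F, ψ (((T₁ - T) * T₂).trace)
      = f T * (Fintype.card (Matrix (Fin m) (Fin n) F) : ℂ) := by
    calc _ = ∑ T₁ : Matrix (Fin n) (Fin m) F, if T₁ = T then
            f T₁ * (Fintype.card (Matrix (Fin m) (Fin n) F) : ℂ) else 0 :=
          Finset.sum_congr rfl fun T₁ _ => by rw [horth, mul_ite, mul_zero]
      _ = _ := by simp
  rw [step2]
  calc (((Fintype.card F : ℝ) ^ (-((n : ℝ) * (m : ℝ)) / 2) : ℝ) : ℂ) *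
        ((((Fintype.card F : ℝ) ^ (-((m : ℝ) * (n : ℝ)) / 2) : ℝ) : ℂ) *
          (f T * (Fintype.card (Matrix (Fin m) (Fin n) F) : ℂ)))
      = ((((Fintype.card F : ℝ) ^ (-((m : ℝ) * (n : ℝ)) / 2) : ℝ) : ℂ) *
          (((Fintype.card F : ℝ) ^ (-((n : ℝ) * (m : ℝ)) / 2) : ℝ) : ℂ) *
          (Fintype.card (Matrix (Fin m) (Fin n) F) : ℂ)) * f T := by ring
    _ = f T := by rw [ft_const_sq m n, one_mul]

lemma FTmat_FTinv (ψ : AddChar F ℂ) (hψ : ∃ a, ψ a ≠ 1) {m n : ℕ}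
    (g : Matrix (Fin m) (Fin n) F → ℂ) : FTmat ψ (FTinv ψ g) = g := by
  have hψ' : ∃ a, (-ψ) a ≠ 1 := by
    obtain ⟨a, ha⟩ := hψ
    exact ⟨-a, by simpa using ha⟩
  have h := FTinv_FTmat (-ψ) hψ' (m := n) (n := m) g
  simpa [FTinv, neg_neg] using h

lemma FTmat_finsum {ι : Type*} [Fintype ι] (ψ : AddChar F ℂ) {m n : ℕ}
    (w : ι → ℂ) (f : ι → Matrix (Fin n) (Fin m) F → ℂ) (T₂ : Matrix (Fin m) (Fin n) F) :
    FTmat ψ (fun T => ∑ i, w i * f i T) T₂ = ∑ i, w i * FTmat ψ (f i) T₂ := by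
  unfold FTmat
  simp only [Finset.sum_mul, mul_assoc]
  rw [Finset.sum_comm, Finset.mul_sum]
  refine Finset.sum_congr rfl fun i _ => ?_
  rw [← Finset.mul_sum]
  ring

end AuxLemmas

/-- For nontrivial `ψ`: (0) `FT` is linear, (1) `FT` restricts to a bijection between
the spaces of Borel-bi-invariant functions, and (2) `FT` intertwines the Hecke
convolution actions. -/
theorem FTmat_borel_bijOn_and_hecke_equivariant
    {F : Type*} [Field F] [Fintype F] [DecidableEq F] {m n : ℕ}
    (ψ : AddChar F ℂ) (hψ : ∃ a, ψ a ≠ 1) :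
    (∀ (c : ℂ) (f g : Matrix (Fin n) (Fin m) F → ℂ),
      FTmat ψ (c • f + g) = c • FTmat ψ f + FTmat ψ g) ∧
    Set.BijOn (FTmat ψ) (borelInvL F m n) (borelInvR F m n) ∧
    (∀ (h₁ : GL (Fin m) F → ℂ) (h₂ : GL (Fin n) F → ℂ),
      (∀ b b' : GL (Fin m) F, (↑b : Matrix (Fin m) (Fin m) F).BlockTriangular id →
        (↑b' : Matrix (Fin m) (Fin m) F).BlockTriangular id →
        ∀ g, h₁ (b * g * b') = h₁ g) →
      (∀ b b' : GL (Fin n) F, (↑b : Matrix (Fin n) (Fin n) F).BlockTriangular id →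
        (↑b' : Matrix (Fin n) (Fin n) F).BlockTriangular id →
        ∀ g, h₂ (b * g * b') = h₂ g) →
      ∀ f : Matrix (Fin n) (Fin m) F → ℂ,
        FTmat ψ (heckeConvL h₁ h₂ f) = heckeConvR h₁ h₂ (FTmat ψ f)) := by
  refine ⟨?_, ⟨?_, ?_, ?_⟩, ?_⟩
  · -- linearity
    intro c f g
    funext T₂
    simp only [FTmat, Pi.add_apply, Pi.smul_apply, smul_eq_mul]
    have h : ∑ T₁ : Matrix (Fin n) (Fin m) F,
        (c * f T₁ + g T₁) * ψ ((T₁ * T₂).trace)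
        = c * (∑ T₁ : Matrix (Fin n) (Fin m) F, f T₁ * ψ ((T₁ * T₂).trace)) +
          ∑ T₁ : Matrix (Fin n) (Fin m) F, g T₁ * ψ ((T₁ * T₂).trace) := by
      rw [Finset.mul_sum, ← Finset.sum_add_distrib]
      exact Finset.sum_congr rfl fun T₁ _ => by ring
    rw [h]
    ring
  · -- maps to
    intro f hf
    intro b₁ b₂ hu₁ hu₂ ht₁ ht₂ T
    rw [← FTmat_equivariant ψ f b₁ b₂ hu₁ hu₂ T]
    congr 1
    funext S
    exact hf b₁ b₂ hu₁ hu₂ ht₁ ht₂ S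
  · -- injective on
    intro f _ g _ h
    rw [← FTinv_FTmat ψ hψ f, h, FTinv_FTmat ψ hψ g]
  · -- surjective on
    intro f' hf'
    refine ⟨FTinv ψ f', ?_, FTmat_FTinv ψ hψ f'⟩
    intro b₁ b₂ hu₁ hu₂ ht₁ ht₂ T
    show FTmat (-ψ) f' (b₂⁻¹ * T * b₁) = FTmat (-ψ) f' T
    rw [← FTmat_equivariant (-ψ) f' b₂ b₁ hu₂ hu₁ T]
    congr 1
    funext S
    exact hf' b₁ b₂ hu₁ hu₂ ht₁ ht₂ S
  · -- Hecke equivariance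
    intro h₁ h₂ _ _ f
    funext T₂
    set B : ℂ := (borelCard F m)⁻¹ * (borelCard F n)⁻¹ with hB
    have hL : heckeConvL h₁ h₂ f = fun T =>
        ∑ p : GL (Fin m) F × GL (Fin n) F,
          (B * (h₁ p.1 * h₂ p.2)) *
            f ((↑(p.2⁻¹) : Matrix (Fin n) (Fin n) F) * T *
              (↑p.1 : Matrix (Fin m) (Fin m) F)) := by
      funext T
      unfold heckeConvL
      simp only [Finset.mul_sum, Fintype.sum_prod_type, ← hB]
      exact Finset.sum_congr rfl fun g₁ _ => Finset.sum_congr rfl fun g₂ _ => by ring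
    have hR : heckeConvR h₁ h₂ (FTmat ψ f) T₂ =
        ∑ p : GL (Fin m) F × GL (Fin n) F,
          (B * (h₁ p.1 * h₂ p.2)) *
            FTmat ψ f ((↑(p.1⁻¹) : Matrix (Fin m) (Fin m) F) * T₂ *
              (↑p.2 : Matrix (Fin n) (Fin n) F)) := by
      unfold heckeConvR
      simp only [Finset.mul_sum, Fintype.sum_prod_type, ← hB]
      exact Finset.sum_congr rfl fun g₁ _ => Finset.sum_congr rfl fun g₂ _ => by ring
    rw [hL, hR, FTmat_finsum ψ _
      (fun (p : GL (Fin m) F × GL (Fin n) F) T =>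
        f ((↑(p.2⁻¹) : Matrix (Fin n) (Fin n) F) * T *
          (↑p.1 : Matrix (Fin m) (Fin m) F))) T₂]
    refine Finset.sum_congr rfl fun p _ => ?_
    congr 1
    simp only [Matrix.coe_units_inv]
    exact FTmat_equivariant ψ f _ _ (Units.isUnit p.1) (Units.isUnit p.2) T₂
end

section
/- Let F be a finite field of odd characteristic, ψ : F → ℂ^× a nontrivial additive character, and m, n ≥ 1. Let Ω ∈ Mat_{2n}(F) be invertible with Ωᵀ = −Ω. Then for every function f : Mat_{2n×m}(F) → ℂ the following are equivalent: (i) for every B ∈ Mat_m(F) with Bᵀ = −B and every T ∈ Mat_{2n×m}(F), ψ(2⁻¹ · tr(Tᵀ Ω T B)) · f(T) = f(T); (ii) f(T) = 0 for every T ∈ Mat_{2n×m}(F) with Tᵀ Ω T ≠ 0, i.e. f is supported on the moment cone of matrices whose column span is isotropic for the alternating form with Gram matrix Ω. -/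
/-!
For fixed `T` put `A = Tᵀ Ω T`, a skew-symmetric matrix. If `A = 0` every twist is trivial, so
supported functions are invariant. Conversely, if `A i j ≠ 0` then the skew-symmetric matrices
`B = c • (E_{ji} - E_{ij})` give `2⁻¹ tr(A B) = A i j * c`, which runs through all of `F`; as `ψ` is
nontrivial, some twist at `T` differs from `1`, forcing `f T = 0`.
-/

open Matrix

namespace Matrix

section CommRing

variable {R ι κ : Type*} [CommRing R]

lemma transpose_mul_mul_self_of_transpose_eq_neg [Fintype ι] [Fintype κ] {Ω : Matrix ι ι R}
    (hΩ : Ωᵀ = -Ω) (T : Matrix ι κ R) : (Tᵀ * Ω * T)ᵀ = -(Tᵀ * Ω * T) := by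
  simp [transpose_mul, hΩ, Matrix.mul_assoc]

lemma transpose_single_sub_single [DecidableEq ι] (i j : ι) (c : R) :
    (single j i c - single i j c)ᵀ = -(single j i c - single i j c) := by
  simp [transpose_single]

lemma trace_mul_single_sub_single [Fintype ι] [DecidableEq ι] {A : Matrix ι ι R} (hA : Aᵀ = -A) (i j : ι) (c : R) :
    (A * (single j i c - single i j c)).trace = 2 * A i j * c := by
  have hji : A j i = -A i j := by simpa using congr_fun₂ hA i j
  simp only [Matrix.mul_sub, trace_sub, trace_mul_single, hji, MulOpposite.smul_eq_mul_unop,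
    MulOpposite.unop_op]
  ring

end CommRing

lemma eq_zero_of_forall_addChar_half_trace_mul_eq_one {F M ι : Type*} [Field F] [Monoid M]
    [Fintype ι] [DecidableEq ι] (h2 : (2 : F) ≠ 0) {ψ : AddChar F M} (hψ : ∃ a, ψ a ≠ 1)
    {A : Matrix ι ι F} (hA : Aᵀ = -A)
    (h : ∀ B : Matrix ι ι F, Bᵀ = -B → ψ ((2 : F)⁻¹ * (A * B).trace) = 1) : A = 0 := by
  by_contra hA0
  obtain ⟨i, j, hij⟩ : ∃ i j, A i j ≠ 0 := by
    by_contra! hzero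
    exact hA0 (Matrix.ext hzero)
  obtain ⟨a, ha⟩ := hψ
  have htwist := h _ (transpose_single_sub_single i j (a / A i j))
  rw [trace_mul_single_sub_single hA, show (2 : F)⁻¹ * (2 * A i j * (a / A i j)) = a by
    field_simp] at htwist
  exact ha htwist

end Matrix

theorem twist_invariant_iff_supported_on_momentCone_general
    {F : Type*} [Field F] (hchar : Odd (ringChar F))
    (ψ : AddChar F ℂ) (hψ : ∃ a, ψ a ≠ 1)
    {m n : ℕ}
    (Ω : Matrix (Fin (2 * n)) (Fin (2 * n)) F) (hskew : Ωᵀ = -Ω)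
    (f : Matrix (Fin (2 * n)) (Fin m) F → ℂ) :
    (∀ B : Matrix (Fin m) (Fin m) F, Bᵀ = -B →
      ∀ T : Matrix (Fin (2 * n)) (Fin m) F,
        ψ ((2 : F)⁻¹ * (Tᵀ * Ω * T * B).trace) * f T = f T) ↔
    (∀ T : Matrix (Fin (2 * n)) (Fin m) F, Tᵀ * Ω * T ≠ 0 → f T = 0) := by
  have h2 : (2 : F) ≠ 0 := Ring.two_ne_zero fun h => by
    rw [h] at hchar
    exact Nat.not_odd_iff_even.mpr even_two hchar
  constructor
  · intro H T hT
    by_contra hf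
    exact hT <| eq_zero_of_forall_addChar_half_trace_mul_eq_one h2 hψ
      (transpose_mul_mul_self_of_transpose_eq_neg hskew T)
      fun B hB => (mul_eq_right₀ hf).mp (H B hB T)
  · intro H B _ T
    by_cases hT : Tᵀ * Ω * T = 0
    · simp [hT]
    · simp [H T hT]

/-- Let `F` be a finite field of odd characteristic, `ψ` a nontrivial additive
character of `F`, and `Ω` an invertible skew-symmetric `2n × 2n` matrix.  A function
`f` on `Mat_{2n×m}(F)` satisfies `ψ(2⁻¹ tr(Tᵀ Ω T B)) f(T) = f(T)` for every
skew-symmetric `B ∈ Mat_m(F)` and every `T` iff `f` is supported on the moment cone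
`{T : Tᵀ Ω T = 0}`. -/
theorem twist_invariant_iff_supported_on_momentCone
    {F : Type*} [Field F] [Fintype F] (hchar : Odd (ringChar F))
    (ψ : AddChar F ℂ) (hψ : ∃ a, ψ a ≠ 1)
    {m n : ℕ} (hm : 1 ≤ m) (hn : 1 ≤ n)
    (Ω : Matrix (Fin (2 * n)) (Fin (2 * n)) F) (hΩ : IsUnit Ω) (hskew : Ωᵀ = -Ω)
    (f : Matrix (Fin (2 * n)) (Fin m) F → ℂ) :
    (∀ B : Matrix (Fin m) (Fin m) F, Bᵀ = -B →
      ∀ T : Matrix (Fin (2 * n)) (Fin m) F,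
        ψ ((2 : F)⁻¹ * (Tᵀ * Ω * T * B).trace) * f T = f T) ↔
    (∀ T : Matrix (Fin (2 * n)) (Fin m) F, Tᵀ * Ω * T ≠ 0 → f T = 0) :=
  twist_invariant_iff_supported_on_momentCone_general hchar ψ hψ Ω hskew f
end
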